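/- arXiv:1405.4705 — 7 statements merged into one kernel-verified Lean document; each statement's English description precedes it below -/
import Mathlib

section
/- Let $a_1,\dots,a_k > 0$ and $A_1 > A_2 > \cdots > A_k > 0$. Define $f(x) = \left(\sum_{j=1}^{k} a_j A_j^x\right)^{1/x}$ for $x \in (0,\infty)$. Then as $x \to \infty$, $f'(x) = (-A_1 \ln a_1)\frac{1}{x^2} + o\!\left(\frac{1}{x^2}\right)$; i.e., $\lim_{x\to\infty} x^2 f'(x) = -A_1 \ln a_1$. -/
/-!
Write `N x = ∑ j, a j * A j ^ x` and `L = log N`, so that `f x = exp (L x / x)` and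
`x ^ 2 * f' x = f x * (x * L' x - L x)`. The dominant term gives `N x ~ a₁ A₁ ^ x`, hence
`L x - x log A₁ → log a₁`, while the other terms decay exponentially relative to it, hence
`x * (L' x - log A₁) → 0`. So `x * L' x - L x → -log a₁` and `f x → A₁`.
-/

open Filter Real Topology

lemma tendsto_mul_rpow_atTop_nhds_zero {ρ : ℝ} (h0 : 0 < ρ) (h1 : ρ < 1) :
    Tendsto (fun x : ℝ => x * ρ ^ x) atTop (𝓝 0) := by
  have hlog : 0 < -log ρ := neg_pos.mpr (log_neg h0 h1)
  refine (tendsto_rpow_mul_exp_neg_mul_atTop_nhds_zero 1 (-log ρ) hlog).congr fun x => ?_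
  rw [rpow_one, rpow_def_of_pos h0, neg_neg, mul_comm (log ρ)]

lemma sq_mul_deriv_exp_div_self {L : ℝ → ℝ} {L' x : ℝ} (hx : x ≠ 0) (hL : HasDerivAt L L' x) :
    x ^ 2 * deriv (fun y => exp (L y / y)) x = exp (L x / x) * (x * L' - L x) := by
  have h : HasDerivAt (fun y => exp (L y / y)) _ x := (hL.div (hasDerivAt_id' x) hx).exp
  rw [h.deriv, Pi.div_apply]
  field_simp

lemma tendsto_sq_mul_deriv_exp_div_self {L L' : ℝ → ℝ} {c d : ℝ}
    (hL : ∀ x, HasDerivAt L (L' x) x)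
    (hvalue : Tendsto (fun x => L x - x * c) atTop (𝓝 d))
    (hslope : Tendsto (fun x => x * (L' x - c)) atTop (𝓝 0)) :
    Tendsto (fun x => x ^ 2 * deriv (fun y => exp (L y / y)) x) atTop (𝓝 (-exp c * d)) := by
  have hquot : Tendsto (fun x => L x / x) atTop (𝓝 c) := by
    have h := (hvalue.mul tendsto_inv_atTop_zero).const_add c
    rw [mul_zero, add_zero] at h
    refine h.congr' ?_
    filter_upwards [eventually_ne_atTop 0] with x hx
    field_simp
    ring
  have hdiff : Tendsto (fun x => x * L' x - L x) atTop (𝓝 (-d)) := by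
    have h := hslope.sub hvalue
    rw [zero_sub] at h
    exact h.congr fun x => by ring
  have h := ((continuous_exp.tendsto c).comp hquot).mul hdiff
  rw [mul_neg, ← neg_mul] at h
  refine h.congr' ?_
  filter_upwards [eventually_ne_atTop 0] with x hx
  exact (sq_mul_deriv_exp_div_self hx (hL x)).symm

noncomputable def expSum {ι : Type*} [Fintype ι] (a A : ι → ℝ) (x : ℝ) : ℝ :=
  ∑ j, a j * A j ^ x

section expSum

variable {ι : Type*} [Fintype ι] {a A : ι → ℝ} {i₀ : ι}

lemma expSum_pos [Nonempty ι] (ha : ∀ j, 0 < a j) (hA : ∀ j, 0 < A j) (x : ℝ) :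
    0 < expSum a A x :=
  Finset.sum_pos (fun j _ => mul_pos (ha j) (rpow_pos_of_pos (hA j) x)) Finset.univ_nonempty

lemma hasDerivAt_expSum (hA : ∀ j, 0 < A j) (x : ℝ) :
    HasDerivAt (expSum a A) (expSum (fun j => a j * log (A j)) A x) x := by
  unfold expSum
  refine (HasDerivAt.fun_sum fun j _ =>
    ((hasStrictDerivAt_const_rpow (hA j) x).hasDerivAt).const_mul (a j)).congr_deriv ?_
  exact Finset.sum_congr rfl fun j _ => by ring

lemma expSum_div_rpow (hA : ∀ j, 0 < A j) (x : ℝ) :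
    expSum a A x / A i₀ ^ x = ∑ j, a j * (A j / A i₀) ^ x := by
  simp only [expSum, Finset.sum_div]
  exact Finset.sum_congr rfl fun j _ => by
    rw [div_rpow (hA j).le (hA i₀).le, mul_div_assoc]

variable (hA : ∀ j, 0 < A j) (hdom : ∀ j ≠ i₀, A j < A i₀)
include hA hdom

omit [Fintype ι] in
lemma div_dominant_mem_Ioo {j : ι} (hj : j ≠ i₀) : A j / A i₀ ∈ Set.Ioo 0 1 :=
  ⟨div_pos (hA j) (hA i₀), (div_lt_one (hA i₀)).mpr (hdom j hj)⟩

lemma tendsto_expSum_div_rpow :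
    Tendsto (fun x => expSum a A x / A i₀ ^ x) atTop (𝓝 (a i₀)) := by
  classical
  have hterm : ∀ j, Tendsto (fun x : ℝ => a j * (A j / A i₀) ^ x) atTop
      (𝓝 (if j = i₀ then a i₀ else 0)) := by
    intro j
    by_cases hj : j = i₀
    · subst hj
      simp only [div_self (hA j).ne', one_rpow, mul_one, if_true]
      exact tendsto_const_nhds
    · obtain ⟨h0, h1⟩ := div_dominant_mem_Ioo hA hdom hj
      simpa [hj] using
        (tendsto_rpow_atTop_of_base_lt_one _ (by linarith) h1).const_mul (a j)
  have h := tendsto_finsetSum Finset.univ fun j _ => hterm j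
  rw [Finset.sum_ite_eq' Finset.univ i₀, if_pos (Finset.mem_univ _)] at h
  exact h.congr fun x => (expSum_div_rpow hA x).symm

lemma tendsto_mul_expSum_div_rpow (h₀ : a i₀ = 0) :
    Tendsto (fun x => x * (expSum a A x / A i₀ ^ x)) atTop (𝓝 0) := by
  have hterm : ∀ j, Tendsto (fun x : ℝ => x * (A j / A i₀) ^ x * a j) atTop (𝓝 0) := by
    intro j
    by_cases hj : j = i₀
    · subst hj
      simp only [h₀, mul_zero]
      exact tendsto_const_nhds
    · obtain ⟨h0, h1⟩ := div_dominant_mem_Ioo hA hdom hj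
      simpa using (tendsto_mul_rpow_atTop_nhds_zero h0 h1).mul_const (a j)
  have h := tendsto_finsetSum Finset.univ fun j _ => hterm j
  rw [Finset.sum_const_zero] at h
  refine h.congr fun x => ?_
  rw [expSum_div_rpow hA, Finset.mul_sum]
  exact Finset.sum_congr rfl fun j _ => by ring

variable (ha : ∀ j, 0 < a j)
include ha

lemma tendsto_log_expSum_sub :
    Tendsto (fun x => log (expSum a A x) - x * log (A i₀)) atTop (𝓝 (log (a i₀))) := by
  have : Nonempty ι := ⟨i₀⟩
  refine ((continuousAt_log (ha i₀).ne').tendsto.comp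
    (tendsto_expSum_div_rpow hA hdom)).congr fun x => ?_
  simp only [Function.comp, log_div (expSum_pos ha hA x).ne' (rpow_pos_of_pos (hA i₀) x).ne',
    log_rpow (hA i₀)]

lemma tendsto_mul_logDeriv_expSum_sub :
    Tendsto (fun x => x * (expSum (fun j => a j * log (A j)) A x / expSum a A x - log (A i₀)))
      atTop (𝓝 0) := by
  have : Nonempty ι := ⟨i₀⟩
  have hnum := tendsto_mul_expSum_div_rpow (a := fun j => a j * (log (A j) - log (A i₀)))
    hA hdom (by simp)
  have h := hnum.div (tendsto_expSum_div_rpow hA hdom) (ha i₀).ne'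
  rw [zero_div] at h
  refine h.congr fun x => ?_
  have hsplit : expSum (fun j => a j * (log (A j) - log (A i₀))) A x
      = expSum (fun j => a j * log (A j)) A x - expSum a A x * log (A i₀) := by
    simp only [expSum, Finset.sum_mul, ← Finset.sum_sub_distrib]
    exact Finset.sum_congr rfl fun j _ => by ring
  have hN := (expSum_pos ha hA x).ne'
  have hpow := (rpow_pos_of_pos (hA i₀) x).ne'
  rw [Pi.div_apply, hsplit]
  field_simp

end expSum

theorem stmt1 (k : ℕ) (hk : 0 < k) (a A : Fin k → ℝ)
    (ha : ∀ j, 0 < a j) (hA : ∀ j, 0 < A j) (hanti : StrictAnti A)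
    (f : ℝ → ℝ)
    (hf : ∀ x, f x = (∑ j, a j * A j ^ x) ^ x⁻¹) :
    Tendsto (fun x : ℝ => x ^ 2 * deriv f x) atTop
      (nhds (-(A ⟨0, hk⟩) * Real.log (a ⟨0, hk⟩))) := by
  set i₀ : Fin k := ⟨0, hk⟩
  have : Nonempty (Fin k) := ⟨i₀⟩
  have hdom : ∀ j ≠ i₀, A j < A i₀ := fun j hj =>
    hanti (Fin.lt_def.mpr (Nat.pos_of_ne_zero fun h => hj (Fin.ext h)))
  have hf_exp : f = fun y => exp (log (expSum a A y) / y) := by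
    funext y
    rw [hf]
    change expSum a A y ^ y⁻¹ = _
    rw [rpow_def_of_pos (expSum_pos ha hA y), div_eq_mul_inv]
  have h := tendsto_sq_mul_deriv_exp_div_self
    (fun x => (hasDerivAt_expSum hA x).log (expSum_pos ha hA x).ne')
    (tendsto_log_expSum_sub hA hdom ha) (tendsto_mul_logDeriv_expSum_sub hA hdom ha)
  rwa [exp_log (hA i₀), ← hf_exp] at h
end

section
/- Fix an integer $N \geq 2$ and let $\theta_j = \frac{2\pi j}{N}$. For every $N$-th partial-sum structure the following holds: for all $t \in (0,1)$, $\sum_{j=1}^{N} \frac{1}{(1 - t\cos(\theta_j - \frac{\pi}{N}))^{3/2}} < \sum_{j=1}^{N} \frac{1}{(1 - t\cos\theta_j)^{3/2}}$. -/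
/-!
Expand $(1 - x)^{-a} = \sum_n c_n x^n$ on $|x| < 1$, where $c_n = \binom{a+n-1}{n} > 0$ for
$a > 0$. The inequality then follows from comparing the power sums
$P_m(\varphi) = \sum_j \cos^m(\theta_j + \varphi)$ at $\varphi = -\pi/N$ and $\varphi = 0$.
Expanding $(2\cos x)^m$ binomially in exponentials and filtering with the $N$-th roots of unity
gives $2^m P_m(\varphi) = N \sum_{k \le m,\ N \mid 2k - m} \binom{m}{k} \cos((2k - m)\varphi)$,
so $P_m(\varphi) \le P_m(0)$, strictly for $m = N$ as soon as $\cos(N\varphi) < 1$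
(the term $k = 0$).
-/

open Real

lemma Ring.choose_add_sub_one_pos {R : Type*} [Field R] [LinearOrder R]
    [IsStrictOrderedRing R] {a : R} (ha : 0 < a) (n : ℕ) : 0 < Ring.choose (a + n - 1) n := by
  rw [Ring.choose_eq_smul, Polynomial.descPochhammer_smeval_eq_ascPochhammer,
    Polynomial.ascPochhammer_smeval_eq_eval, smul_eq_mul]
  have := ascPochhammer_pos n (a + n - 1 - n + 1) (by linarith)
  positivity

lemma hasSum_one_sub_rpow_neg {a x : ℝ} (hx : |x| < 1) :
    HasSum (fun n : ℕ => Ring.choose (a + n - 1) n * x ^ n) ((1 - x) ^ (-a)) := by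
  have h := (one_div_one_sub_rpow_hasFPowerSeriesOnBall_zero a).hasSum
    (y := x) (by simpa [enorm_eq_nnnorm, ← NNReal.coe_lt_coe] using hx)
  rw [FormalMultilinearSeries.ofScalars_apply_eq'] at h
  simpa [Real.rpow_neg (by linarith [(abs_lt.mp hx).2] : (0:ℝ) ≤ 1 - x)] using h

lemma Complex.two_mul_cos_pow (z : ℂ) (m : ℕ) :
    (2 * Complex.cos z) ^ m = ∑ k ∈ Finset.range (m + 1),
      (m.choose k : ℂ) * Complex.exp (((2 * k - m : ℤ) : ℂ) * z * Complex.I) := by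
  rw [Complex.cos, mul_div_cancel₀ _ two_ne_zero, add_pow]
  refine Finset.sum_congr rfl fun k hk => ?_
  have hk : k ≤ m := Nat.lt_succ_iff.mp (Finset.mem_range.mp hk)
  rw [← Complex.exp_nat_mul, ← Complex.exp_nat_mul, ← Complex.exp_add, mul_comm]
  congr 2
  push_cast [Nat.cast_sub hk]
  ring

lemma sum_Icc_exp_two_pi_mul_I (N : ℕ) (hN : 0 < N) (r : ℤ) :
    ∑ j ∈ Finset.Icc 1 N, Complex.exp (r * (2 * π * j / N) * Complex.I) =
      if (N : ℤ) ∣ r then (N : ℂ) else 0 := by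
  have hN0 : (N : ℂ) ≠ 0 := Nat.cast_ne_zero.mpr hN.ne'
  set z := Complex.exp (r * (2 * π / N) * Complex.I) with hz
  have hpow : ∀ j : ℕ, Complex.exp (r * (2 * π * j / N) * Complex.I) = z ^ j := fun j => by
    rw [hz, ← Complex.exp_nat_mul]; ring_nf
  simp only [hpow]
  split_ifs with hr
  · obtain ⟨q, rfl⟩ := hr
    have hz1 : z = 1 := by
      rw [hz, ← Complex.exp_int_mul_two_pi_mul_I q]; push_cast; field_simp
    simp [hz1]
  · have hz1 : z ≠ 1 := by
      rw [hz, Ne, Complex.exp_eq_one_iff]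
      rintro ⟨n, hn⟩
      field_simp at hn
      exact hr ⟨n, by exact_mod_cast hn⟩
    have hzN : z ^ N = 1 := by
      rw [← hpow, ← Complex.exp_int_mul_two_pi_mul_I r]; field_simp
    have hgeom : ∑ i ∈ Finset.range N, z ^ i = 0 := by
      have := geom_sum_mul z N
      rw [hzN, sub_self] at this
      exact (mul_eq_zero.mp this).resolve_right (sub_ne_zero.mpr hz1)
    rw [← Finset.Ico_add_one_right_eq_Icc, Finset.sum_Ico_eq_sum_range, Nat.add_sub_cancel]
    simp only [pow_add, pow_one, ← Finset.mul_sum, hgeom, mul_zero]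

lemma two_pow_mul_sum_cos_pow (N : ℕ) (hN : 0 < N) (φ : ℝ) (m : ℕ) :
    2 ^ m * ∑ j ∈ Finset.Icc 1 N, cos (2 * π * j / N + φ) ^ m =
      N * ∑ k ∈ (Finset.range (m + 1)).filter (fun k : ℕ => (N : ℤ) ∣ 2 * k - m),
        m.choose k * cos ((2 * k - m : ℤ) * φ) := by
  have key : ((2 ^ m * ∑ j ∈ Finset.Icc 1 N, cos (2 * π * j / N + φ) ^ m : ℝ) : ℂ) =
      ∑ k ∈ Finset.range (m + 1), (m.choose k : ℂ) *
        Complex.exp (((2 * k - m : ℤ) : ℂ) * φ * Complex.I) *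
        (if (N : ℤ) ∣ 2 * k - m then (N : ℂ) else 0) := by
    push_cast
    simp_rw [Finset.mul_sum, ← mul_pow, Complex.two_mul_cos_pow,
      ← sum_Icc_exp_two_pi_mul_I N hN, Finset.mul_sum]
    rw [Finset.sum_comm]
    refine Finset.sum_congr rfl fun k _ => Finset.sum_congr rfl fun j _ => ?_
    rw [mul_assoc (m.choose k : ℂ) (Complex.exp _), ← Complex.exp_add]
    congr 2
    push_cast
    ring
  have hre := congrArg Complex.re key
  rw [Complex.ofReal_re] at hre
  rw [hre, Complex.re_sum, Finset.sum_filter, Finset.mul_sum]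
  refine Finset.sum_congr rfl fun k _ => ?_
  split_ifs
  · rw [← Complex.ofReal_intCast, ← Complex.ofReal_mul]
    simp only [Complex.mul_re, Complex.natCast_re, Complex.natCast_im,
      Complex.exp_ofReal_mul_I_re, zero_mul, mul_zero, sub_zero]
    ring
  · simp

lemma two_pow_mul_sub_sum_cos_pow (N : ℕ) (hN : 0 < N) (φ : ℝ) (m : ℕ) :
    2 ^ m * (∑ j ∈ Finset.Icc 1 N, cos (2 * π * j / N) ^ m -
        ∑ j ∈ Finset.Icc 1 N, cos (2 * π * j / N + φ) ^ m) =
      N * ∑ k ∈ (Finset.range (m + 1)).filter (fun k : ℕ => (N : ℤ) ∣ 2 * k - m),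
        m.choose k * (1 - cos ((2 * k - m : ℤ) * φ)) := by
  have h0 := two_pow_mul_sum_cos_pow N hN 0 m
  simp only [add_zero, mul_zero, cos_zero, mul_one] at h0
  rw [mul_sub, h0, two_pow_mul_sum_cos_pow N hN φ m, ← mul_sub, ← Finset.sum_sub_distrib]
  simp only [mul_sub, mul_one]

lemma sum_cos_pow_add_le (N : ℕ) (hN : 0 < N) (φ : ℝ) (m : ℕ) :
    ∑ j ∈ Finset.Icc 1 N, cos (2 * π * j / N + φ) ^ m ≤
      ∑ j ∈ Finset.Icc 1 N, cos (2 * π * j / N) ^ m := by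
  refine sub_nonneg.mp (nonneg_of_mul_nonneg_right ?_ (by positivity : (0 : ℝ) < 2 ^ m))
  rw [two_pow_mul_sub_sum_cos_pow N hN φ m]
  exact mul_nonneg N.cast_nonneg <| Finset.sum_nonneg fun k _ =>
    mul_nonneg (Nat.cast_nonneg _) (sub_nonneg.mpr (cos_le_one _))

lemma sum_cos_pow_add_lt (N : ℕ) (hN : 0 < N) {φ : ℝ} (hφ : cos (N * φ) < 1) :
    ∑ j ∈ Finset.Icc 1 N, cos (2 * π * j / N + φ) ^ N <
      ∑ j ∈ Finset.Icc 1 N, cos (2 * π * j / N) ^ N := by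
  refine sub_pos.mp (pos_of_mul_pos_right ?_ (by positivity : (0 : ℝ) ≤ 2 ^ N))
  rw [two_pow_mul_sub_sum_cos_pow N hN φ N]
  have hk0 : 0 ∈ (Finset.range (N + 1)).filter (fun k : ℕ => (N : ℤ) ∣ 2 * k - N) := by simp
  refine mul_pos (by exact_mod_cast hN) <| Finset.sum_pos' (fun k _ =>
    mul_nonneg (Nat.cast_nonneg _) (sub_nonneg.mpr (cos_le_one _))) ⟨0, hk0, ?_⟩
  simpa [neg_mul, cos_neg] using hφ

theorem sum_one_sub_rpow_neg_lt {ι : Type*} (s : Finset ι) {a : ℝ} (ha : 0 < a) {u v : ι → ℝ}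
    (hu : ∀ i ∈ s, |u i| < 1) (hv : ∀ i ∈ s, |v i| < 1)
    (hle : ∀ n : ℕ, ∑ i ∈ s, u i ^ n ≤ ∑ i ∈ s, v i ^ n) {m : ℕ}
    (hlt : ∑ i ∈ s, u i ^ m < ∑ i ∈ s, v i ^ m) :
    ∑ i ∈ s, (1 - u i) ^ (-a) < ∑ i ∈ s, (1 - v i) ^ (-a) := by
  have hsum : ∀ w : ι → ℝ, (∀ i ∈ s, |w i| < 1) → HasSum
      (fun n : ℕ => Ring.choose (a + n - 1) n * ∑ i ∈ s, w i ^ n) (∑ i ∈ s, (1 - w i) ^ (-a)) :=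
    fun w hw => by
      simp_rw [Finset.mul_sum]
      exact hasSum_sum fun i hi => hasSum_one_sub_rpow_neg (hw i hi)
  have hc := Ring.choose_add_sub_one_pos ha
  exact hasSum_lt (fun n => mul_le_mul_of_nonneg_left (hle n) (hc n).le)
    (mul_lt_mul_of_pos_left hlt (hc m)) (hsum u hu) (hsum v hv)

theorem stmt5 (N : ℕ) (hN : 2 ≤ N) (t : ℝ) (ht : t ∈ Set.Ioo (0:ℝ) 1) :
    ∑ j ∈ Finset.Icc 1 N, (1 - t * Real.cos (2 * π * j / N - π / N)) ^ (-(3:ℝ)/2)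
      < ∑ j ∈ Finset.Icc 1 N, (1 - t * Real.cos (2 * π * j / N)) ^ (-(3:ℝ)/2) := by
  obtain ⟨ht0, ht1⟩ := ht
  have hN0 : 0 < N := by omega
  have habs : ∀ x : ℝ, |t * cos x| < 1 := fun x => by
    rw [abs_mul, abs_of_pos ht0]
    nlinarith [abs_cos_le_one x, abs_nonneg (cos x)]
  have hcos : cos (N * (-(π / N))) < 1 := by
    rw [mul_neg, mul_div_cancel₀ _ (by exact_mod_cast hN0.ne'), cos_neg, cos_pi]
    norm_num
  simp_rw [sub_eq_add_neg (2 * π * _ / _), neg_div]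
  refine sum_one_sub_rpow_neg_lt _ (by norm_num) (fun j _ => habs _) (fun j _ => habs _)
    (m := N) (fun n => ?_) ?_ <;> simp_rw [mul_pow, ← Finset.mul_sum]
  · exact mul_le_mul_of_nonneg_left (sum_cos_pow_add_le N hN0 _ n) (by positivity)
  · exact mul_lt_mul_of_pos_left (sum_cos_pow_add_lt N hN0 hcos) (by positivity)
end

section
/- Fix an integer $N \geq 2$ and let $\theta_j = \frac{2\pi j}{N}$. For each integer $m \geq 0$, the quantity $\sum_{j=1}^{N} \left(\cos^m(\theta_j - \tfrac{\pi}{N}) - \cos^m \theta_j\right)$ is nonpositive. -/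
open Real Finset

/-!
Writing `cos θ = (e^{iθ} + e^{-iθ}) / 2` gives `cos^m θ = 2^{-m} ∑_k C(m,k) e^{i(2k-m)θ}`.
Summing over `θ = 2πj/N + φ`, the roots of unity annihilate every frequency `2k - m` that
`N` does not divide, so `∑_j cos^m (2πj/N + φ) = N 2^{-m} ∑_{N ∣ 2k-m} C(m,k) cos ((2k-m)φ)`.
The difference between `φ = -π/N` and `φ = 0` is then a nonnegative combination of the
numbers `cos ((2k-m)π/N) - 1 ≤ 0`.
-/

lemma sum_Icc_pow_eq_ite_of_pow_eq_one {K : Type*} [Field K] [DecidableEq K] {x : K} {N : ℕ}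
    (hx : x ^ N = 1) :
    ∑ j ∈ Icc 1 N, x ^ j = if x = 1 then (N : K) else 0 := by
  split_ifs with h1
  · simp [h1]
  have hshift : ∑ j ∈ Icc 1 N, x ^ j = x * ∑ j ∈ range N, x ^ j := by
    rw [mul_sum, ← Ico_add_one_right_eq_Icc, sum_Ico_eq_sum_range]
    simp [pow_succ', add_comm]
  rw [hshift, geom_sum_eq h1, hx, sub_self, zero_div, mul_zero]

lemma Complex.sum_Icc_exp_int_mul (N : ℕ) (hN : N ≠ 0) (l : ℤ) (φ : ℂ) :
    ∑ j ∈ Icc 1 N, Complex.exp (l * (2 * π * j / N + φ) * Complex.I) =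
      if (N : ℤ) ∣ l then N * Complex.exp (l * φ * Complex.I) else 0 := by
  set ζ := Complex.exp (2 * π * Complex.I / N)
  have hζ : IsPrimitiveRoot ζ N := Complex.isPrimitiveRoot_exp N hN
  have hterm (j : ℕ) : Complex.exp (l * (2 * π * j / N + φ) * Complex.I) =
      Complex.exp (l * φ * Complex.I) * (ζ ^ l) ^ j := by
    rw [← Complex.exp_int_mul, ← Complex.exp_nat_mul, ← Complex.exp_add]
    ring_nf
  have hpow : (ζ ^ l) ^ N = 1 := by
    rw [← zpow_natCast, ← zpow_mul, mul_comm, zpow_mul, zpow_natCast, hζ.pow_eq_one, one_zpow]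
  simp_rw [hterm, ← mul_sum, sum_Icc_pow_eq_ite_of_pow_eq_one hpow, hζ.zpow_eq_one_iff_dvd]
  split_ifs <;> ring

lemma Complex.cos_pow_eq_sum_exp (x : ℂ) (m : ℕ) :
    Complex.cos x ^ m =
      ∑ k ∈ range (m + 1), m.choose k / 2 ^ m * Complex.exp ((2 * k - m : ℤ) * x * Complex.I) := by
  rw [Complex.cos, div_pow, add_pow, sum_div]
  refine sum_congr rfl fun k hk => ?_
  have hkm : k ≤ m := Nat.lt_succ_iff.mp (mem_range.mp hk)
  rw [← Complex.exp_nat_mul, ← Complex.exp_nat_mul, ← Complex.exp_add]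
  push_cast [Nat.cast_sub hkm]
  ring_nf

lemma Complex.sum_Icc_cos_pow (N : ℕ) (hN : N ≠ 0) (m : ℕ) (φ : ℂ) :
    ∑ j ∈ Icc 1 N, Complex.cos (2 * π * j / N + φ) ^ m =
      ∑ k ∈ range (m + 1) with (N : ℤ) ∣ 2 * ((k : ℕ) : ℤ) - m,
        m.choose k * N / 2 ^ m * Complex.exp ((2 * k - m : ℤ) * φ * Complex.I) := by
  simp_rw [Complex.cos_pow_eq_sum_exp]
  rw [sum_comm, sum_filter]
  refine sum_congr rfl fun k _ => ?_
  rw [← mul_sum, Complex.sum_Icc_exp_int_mul N hN]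
  split_ifs <;> ring

theorem Real.sum_Icc_cos_pow (N : ℕ) (hN : N ≠ 0) (m : ℕ) (φ : ℝ) :
    ∑ j ∈ Icc 1 N, cos (2 * π * j / N + φ) ^ m =
      ∑ k ∈ range (m + 1) with (N : ℤ) ∣ 2 * ((k : ℕ) : ℤ) - m,
        m.choose k * N / 2 ^ m * cos ((2 * k - m : ℤ) * φ) := by
  have h := congrArg Complex.re (Complex.sum_Icc_cos_pow N hN m φ)
  simp only [Complex.re_sum] at h
  convert h using 2 with j _ k _
  · norm_cast
  · rw [← Complex.ofReal_intCast, ← Complex.ofReal_mul, ← Complex.exp_ofReal_mul_I_re,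
      ← Complex.re_ofReal_mul]
    push_cast
    rfl

theorem stmt7_general (N : ℕ) (m : ℕ) :
    ∑ j ∈ Finset.Icc 1 N,
      (Real.cos (2 * π * j / N - π / N) ^ m - Real.cos (2 * π * j / N) ^ m) ≤ 0 := by
  rcases eq_or_ne N 0 with rfl | hN
  · simp
  calc _ = ∑ j ∈ Icc 1 N, cos (2 * π * j / N + -(π / N)) ^ m
        - ∑ j ∈ Icc 1 N, cos (2 * π * j / N + 0) ^ m := by
          simp only [← sub_eq_add_neg, add_zero, sum_sub_distrib]
    _ = ∑ k ∈ range (m + 1) with (N : ℤ) ∣ 2 * ((k : ℕ) : ℤ) - m,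
          m.choose k * N / 2 ^ m * (cos ((2 * k - m : ℤ) * -(π / N)) - 1) := by
          rw [sum_Icc_cos_pow N hN, sum_Icc_cos_pow N hN, ← sum_sub_distrib]
          simp only [mul_zero, cos_zero, mul_sub, mul_one]
    _ ≤ 0 := sum_nonpos fun k _ =>
          mul_nonpos_of_nonneg_of_nonpos (by positivity) (sub_nonpos.2 (cos_le_one _))

theorem stmt7 (N : ℕ) (hN : 2 ≤ N) (m : ℕ) :
    ∑ j ∈ Finset.Icc 1 N,
      (Real.cos (2 * π * j / N - π / N) ^ m - Real.cos (2 * π * j / N) ^ m) ≤ 0 :=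
  stmt7_general N m
end

section
/- Fix an integer $N \geq 2$ and $\theta \in (0, \pi/N)$. Let $g(t,\alpha) = \sum_{j=1}^{N} \frac{\sin(\frac{2\pi j}{N} + \theta)}{(1 - t\cos(\frac{2\pi j}{N} + \theta))^{\alpha}}$ for $t \in (0,1)$, $\alpha > 0$. Then for every fixed $\alpha > 0$ there exists $\delta_\alpha > 0$ such that $g(t,\alpha) > 0$ for all $t \in (0,\delta_\alpha]$. -/
/-!
With `φⱼ = 2πj/N + θ`, the binomial series `(1 - x)^(-α) = ∑ₖ C(α+k-1, k) xᵏ` gives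
`g(t) = ∑_{k<N} C(α+k-1, k) Mₖ tᵏ + O(t^N)` with moments `Mₖ = ∑ⱼ sin φⱼ cos^k φⱼ`.
Writing `sin φ cos^k φ` as the imaginary part of a Laurent polynomial in `e^{iφ}` with exponents
`2i - k + 1 ∈ (-N, N]`, the roots-of-unity filter kills every `Mₖ` with `k < N - 1` and leaves
`M_{N-1} = N sin(Nθ) / 2^(N-1) > 0`, so `g(t)` is a positive multiple of `t^(N-1)` up to `O(t^N)`.
-/

open Real Finset Filter Asymptotics Topology

lemma ringChoose_add_sub_one_pos {a : ℝ} (ha : 0 < a) (n : ℕ) :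
    0 < Ring.choose (a + n - 1) n := by
  rw [Ring.choose_eq_smul, Polynomial.descPochhammer_smeval_eq_ascPochhammer,
    Polynomial.ascPochhammer_smeval_eq_eval, show a + n - 1 - n + 1 = a by ring, smul_eq_mul]
  exact mul_pos (by positivity) (ascPochhammer_pos n a ha)

lemma isBigO_one_div_one_sub_mul_rpow_sub_sum (a c : ℝ) (n : ℕ) :
    (fun t : ℝ => 1 / (1 - t * c) ^ a
        - ∑ k ∈ range n, Ring.choose (a + k - 1) k * c ^ k * t ^ k) =O[𝓝 0] fun t => t ^ n := by
  have hF := (one_div_one_sub_rpow_hasFPowerSeriesOnBall_zero a).hasFPowerSeriesAt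
    |>.isBigO_sub_partialSum_pow n
  have hlin : Tendsto (fun t : ℝ => t * c) (𝓝 0) (𝓝 0) := by
    simpa using (continuous_mul_const c).tendsto 0
  refine ((hF.comp_tendsto hlin).congr_left fun t => ?_).trans ?_
  · simp only [Function.comp_apply, zero_add, FormalMultilinearSeries.partialSum,
      FormalMultilinearSeries.ofScalars_apply_eq, smul_eq_mul, mul_pow]
    exact congrArg _ (sum_congr rfl fun k _ => by ring)
  · refine IsBigO.of_bound (|c| ^ n) (Eventually.of_forall fun t => ?_)
    simp [abs_mul, mul_pow, mul_comm]

lemma sum_Icc_one_pow_of_pow_eq_one {K : Type*} [Field K] [DecidableEq K] {w : K} {N : ℕ}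
    (hw : w ^ N = 1) : ∑ j ∈ Icc 1 N, w ^ j = if w = 1 then (N : K) else 0 := by
  split_ifs with h1
  · simp [h1]
  · have hshift : ∑ j ∈ Icc 1 N, w ^ j = w * ∑ j ∈ range N, w ^ j := by
      rw [← Ico_add_one_right_eq_Icc, sum_Ico_eq_sum_range, Nat.add_sub_cancel, mul_sum]
      exact sum_congr rfl fun j _ => by ring
    rw [hshift, geom_sum_eq h1, hw, sub_self, zero_div, mul_zero]

lemma sum_exp_mul_I_zpow (N : ℕ) (hN : N ≠ 0) (θ : ℝ) (n : ℤ) :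
    ∑ j ∈ Icc 1 N, Complex.exp (↑(2 * π * j / N + θ) * Complex.I) ^ n
      = if (N : ℤ) ∣ n then N * Complex.exp (θ * Complex.I) ^ n else 0 := by
  set ζ := Complex.exp (2 * π * Complex.I / N)
  have hζ : IsPrimitiveRoot ζ N := Complex.isPrimitiveRoot_exp N hN
  have hterm (j : ℕ) : Complex.exp (↑(2 * π * j / N + θ) * Complex.I) ^ n
      = Complex.exp (θ * Complex.I) ^ n * (ζ ^ n) ^ j := by
    rw [← zpow_natCast, ← zpow_mul, mul_comm n, zpow_mul, zpow_natCast, ← mul_zpow,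
      ← Complex.exp_nat_mul, ← Complex.exp_add]
    congr 2
    push_cast
    ring
  have hroot : (ζ ^ n) ^ N = 1 := by
    rw [← zpow_natCast, ← zpow_mul, mul_comm, zpow_mul, zpow_natCast, hζ.pow_eq_one, one_zpow]
  simp_rw [hterm, ← mul_sum, sum_Icc_one_pow_of_pow_eq_one hroot, hζ.zpow_eq_one_iff_dvd]
  split_ifs <;> ring

lemma sin_mul_cos_pow_eq_im (x : ℝ) (m : ℕ) :
    sin x * cos x ^ m = (∑ k ∈ range (m + 1),
      (m.choose k : ℂ) * Complex.exp (x * Complex.I) ^ (2 * k - m + 1 : ℤ)).im / 2 ^ m := by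
  set e := Complex.exp (x * Complex.I)
  have he : e ≠ 0 := Complex.exp_ne_zero _
  have hcos : ((2 * cos x : ℝ) : ℂ) = e + e⁻¹ := by
    rw [← Complex.exp_neg, Complex.ofReal_mul, Complex.ofReal_cos, Complex.ofReal_ofNat,
      Complex.two_cos, neg_mul]
  have hexpand : e * ((2 * cos x : ℝ) : ℂ) ^ m
      = ∑ k ∈ range (m + 1), (m.choose k : ℂ) * e ^ (2 * k - m + 1 : ℤ) := by
    rw [hcos, add_pow, mul_sum]
    refine sum_congr rfl fun k hk => ?_
    have hkm : k ≤ m := Nat.lt_succ_iff.mp (mem_range.mp hk)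
    rw [show (2 * k - m + 1 : ℤ) = 1 + k - (m - k : ℕ) by push_cast [hkm]; ring,
      zpow_sub₀ he, zpow_add₀ he, inv_pow]
    simp only [zpow_one, zpow_natCast]
    field_simp
  have him : (e * ((2 * cos x : ℝ) : ℂ) ^ m).im = sin x * (2 * cos x) ^ m := by
    rw [← Complex.ofReal_pow, Complex.im_mul_ofReal, Complex.exp_ofReal_mul_I_im]
  rw [← hexpand, him, mul_pow]
  field_simp

lemma sum_sin_mul_cos_pow (N : ℕ) (hN : N ≠ 0) (θ : ℝ) {m : ℕ} (hm : m < N) :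
    ∑ j ∈ Icc 1 N, sin (2 * π * j / N + θ) * cos (2 * π * j / N + θ) ^ m
      = if m + 1 = N then N * sin (N * θ) / 2 ^ m else 0 := by
  simp_rw [sin_mul_cos_pow_eq_im, ← sum_div, ← Complex.im_sum]
  rw [sum_comm]
  simp_rw [← mul_sum, sum_exp_mul_I_zpow N hN θ]
  rw [Complex.im_sum, sum_eq_single_of_mem m (self_mem_range_succ m)]
  · rw [Nat.choose_self, Nat.cast_one, one_mul,
      show (2 * m - m + 1 : ℤ) = (m + 1 : ℕ) by push_cast; ring]
    simp only [Int.natCast_dvd_natCast]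
    split_ifs with hdvd heq heq
    · rw [heq, zpow_natCast, ← Complex.exp_nat_mul, ← mul_assoc, ← Complex.ofReal_natCast,
        ← Complex.ofReal_mul, Complex.im_ofReal_mul, Complex.exp_ofReal_mul_I_im]
    · exact absurd (Nat.eq_of_dvd_of_lt_two_mul m.succ_ne_zero hdvd (by omega)) heq
    · exact absurd (heq ▸ dvd_refl N) hdvd
    · simp
  · intro k hk hkm
    have hkm' : k < m := lt_of_le_of_ne (Nat.lt_succ_iff.mp (mem_range.mp hk)) hkm
    split_ifs with hdvd
    · rw [Int.eq_zero_of_dvd_of_natAbs_lt_natAbs hdvd (by omega), zpow_zero, mul_one]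
      simp
    · simp

lemma isBigO_sum_div_one_sub_mul_rpow_sub_sum {ι : Type*} (s : Finset ι) (b c : ι → ℝ)
    (a : ℝ) (n : ℕ) :
    (fun t : ℝ => ∑ i ∈ s, b i / (1 - t * c i) ^ a
        - ∑ k ∈ range n, Ring.choose (a + k - 1) k * (∑ i ∈ s, b i * c i ^ k) * t ^ k)
      =O[𝓝 0] fun t => t ^ n := by
  have hsplit : (fun t : ℝ => ∑ i ∈ s, b i / (1 - t * c i) ^ a
        - ∑ k ∈ range n, Ring.choose (a + k - 1) k * (∑ i ∈ s, b i * c i ^ k) * t ^ k)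
      = fun t => ∑ i ∈ s, b i * (1 / (1 - t * c i) ^ a
        - ∑ k ∈ range n, Ring.choose (a + k - 1) k * c i ^ k * t ^ k) := by
    funext t
    simp only [mul_sub, mul_sum, sum_mul, sum_sub_distrib, mul_one_div]
    rw [sum_comm]
    congr 1
    exact sum_congr rfl fun k _ => sum_congr rfl fun i _ => by ring
  rw [hsplit]
  exact IsBigO.fun_sum fun i _ =>
    (isBigO_one_div_one_sub_mul_rpow_sub_sum a (c i) n).const_mul_left _

lemma eventually_pos_of_isLittleO_sub_mul_pow {f : ℝ → ℝ} {A : ℝ} {n : ℕ} (hA : 0 < A)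
    (h : (fun t => f t - A * t ^ n) =o[𝓝[>] 0] fun t => t ^ n) : ∀ᶠ t in 𝓝[>] 0, 0 < f t := by
  filter_upwards [h.bound (half_pos hA), self_mem_nhdsWithin] with t ht htpos
  have htn : 0 < t ^ n := pow_pos htpos n
  rw [Real.norm_eq_abs, Real.norm_of_nonneg htn.le] at ht
  nlinarith [neg_abs_le (f t - A * t ^ n)]

theorem stmt10 (N : ℕ) (hN : 2 ≤ N) (θ : ℝ) (hθ : θ ∈ Set.Ioo 0 (π / N))
    (α : ℝ) (hα : 0 < α) :
    ∃ δ : ℝ, 0 < δ ∧ δ < 1 ∧ ∀ t ∈ Set.Ioc (0:ℝ) δ,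
      0 < ∑ j ∈ Finset.Icc 1 N,
        Real.sin (2 * π * j / N + θ) /
          (1 - t * Real.cos (2 * π * j / N + θ)) ^ α := by
  have hN0 : N ≠ 0 := by omega
  have hsin : 0 < sin (N * θ) := by
    refine sin_pos_of_pos_of_lt_pi (by have := hθ.1; positivity) ?_
    have := hθ.2
    rwa [lt_div_iff₀' (by positivity)] at this
  set A := Ring.choose (α + (N - 1 : ℕ) - 1) (N - 1) * (N * sin (N * θ) / 2 ^ (N - 1))
  have hA : 0 < A := mul_pos (ringChoose_add_sub_one_pos hα _) (by positivity)
  have hexp := isBigO_sum_div_one_sub_mul_rpow_sub_sum (Icc 1 N)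
    (fun j : ℕ => sin (2 * π * j / N + θ)) (fun j : ℕ => cos (2 * π * j / N + θ)) α N
  have hpoly (t : ℝ) : ∑ k ∈ range N, Ring.choose (α + k - 1) k
      * (∑ j ∈ Icc 1 N, sin (2 * π * j / N + θ) * cos (2 * π * j / N + θ) ^ k) * t ^ k
      = A * t ^ (N - 1) := by
    rw [sum_eq_single_of_mem (N - 1) (mem_range.2 (by omega))]
    · rw [sum_sin_mul_cos_pow N hN0 θ (by omega), if_pos (by omega)]
    · intro k hk hkN
      rw [sum_sin_mul_cos_pow N hN0 θ (mem_range.1 hk), if_neg (by omega), mul_zero, zero_mul]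
  simp only [hpoly] at hexp
  have hpos := eventually_pos_of_isLittleO_sub_mul_pow hA <|
    (hexp.trans_isLittleO (isLittleO_pow_pow (by omega : N - 1 < N))).mono nhdsWithin_le_nhds
  obtain ⟨u, hu, hsub⟩ := mem_nhdsGT_iff_exists_Ioc_subset.1 hpos
  refine ⟨min u (1 / 2), lt_min hu one_half_pos, (min_le_right _ _).trans_lt one_half_lt_one,
    fun t ht => hsub ⟨ht.1, ht.2.trans (min_le_left _ _)⟩⟩
end

section
/- Fix $N \geq 2$, $\theta \in (0,\pi/N)$, and $t \in (0, 1)$. Then $\frac{\ln(\sin(\frac{2\pi}{N} - \theta))}{1 - t\cos(\frac{2\pi}{N} - \theta)} - \frac{\ln(\sin\theta)}{1 - t\cos\theta} > 0$. -/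
open Real

theorem stmt12 (N : ℕ) (hN : 2 ≤ N) (θ t : ℝ)
    (hθ : θ ∈ Set.Ioo 0 (π / N)) (ht : t ∈ Set.Ioo (0:ℝ) 1) :
    0 < Real.log (Real.sin (2 * π / N - θ)) / (1 - t * Real.cos (2 * π / N - θ))
      - Real.log (Real.sin θ) / (1 - t * Real.cos θ) := by
  obtain ⟨hθ0, hθ1⟩ := hθ
  obtain ⟨ht0, ht1⟩ := ht
  have hN2 : (2:ℝ) ≤ (N:ℝ) := by exact_mod_cast hN
  have hNpos : (0:ℝ) < (N:ℝ) := by linarith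
  have hπ := Real.pi_pos
  have hπN : π / N ≤ π / 2 := by
    apply div_le_div_of_nonneg_left (le_of_lt hπ) (by norm_num) hN2
  set φ := 2 * π / N - θ with hφdef
  have hθlt : θ < π / 2 := lt_of_lt_of_le hθ1 hπN
  have hπNpos : 0 < π / N := div_pos hπ hNpos
  have hφgt : π / N < φ := by
    have : 2 * π / N = 2 * (π / N) := by ring
    rw [hφdef, this]; linarith
  have hφpos : 0 < φ := lt_trans hπNpos hφgt
  have hφltπ : φ < π := by
    have h1 : 2 * π / N = 2 * (π / N) := by ring
    have : 2 * (π / N) ≤ π := by linarith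
    rw [hφdef, h1]; linarith
  have hθφ : θ < φ := lt_trans hθ1 hφgt
  have hsθ : 0 < Real.sin θ := Real.sin_pos_of_pos_of_lt_pi hθ0 (by linarith)
  have hsφ : 0 < Real.sin φ := Real.sin_pos_of_pos_of_lt_pi hφpos hφltπ
  have hsθ1 : Real.sin θ < 1 := by
    have := Real.strictMonoOn_sin (by constructor <;> [linarith; linarith] :
        θ ∈ Set.Icc (-(π/2)) (π/2)) (by constructor <;> [linarith; linarith] :
        (π/2 : ℝ) ∈ Set.Icc (-(π/2)) (π/2)) hθlt
    simpa using this
  have hsle : Real.sin θ ≤ Real.sin φ := by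
    have heq : Real.sin φ - Real.sin θ =
        2 * Real.sin ((φ - θ)/2) * Real.cos ((φ + θ)/2) := Real.sin_sub_sin φ θ
    have h1 : (φ - θ)/2 = π / N - θ := by rw [hφdef]; ring
    have h2 : (φ + θ)/2 = π / N := by rw [hφdef]; ring
    have hs1 : 0 < Real.sin ((φ - θ)/2) := by
      rw [h1]; exact Real.sin_pos_of_pos_of_lt_pi (by linarith) (by linarith)
    have hc1 : 0 ≤ Real.cos ((φ + θ)/2) := by
      rw [h2]
      exact Real.cos_nonneg_of_mem_Icc ⟨by linarith, hπN⟩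
    nlinarith
  have hcos : Real.cos φ < Real.cos θ := by
    apply Real.strictAntiOn_cos ⟨le_of_lt hθ0, by linarith⟩ ⟨le_of_lt hφpos, le_of_lt hφltπ⟩ hθφ
  have hcθ1 : Real.cos θ ≤ 1 := Real.cos_le_one θ
  have hcφ1 : Real.cos φ ≤ 1 := Real.cos_le_one φ
  have hb : 0 < 1 - t * Real.cos θ := by nlinarith
  have ha : 0 < 1 - t * Real.cos φ := by nlinarith
  have hab : 1 - t * Real.cos θ < 1 - t * Real.cos φ := by nlinarith
  have hA : Real.log (Real.sin φ) ≤ 0 := Real.log_nonpos (le_of_lt hsφ) (Real.sin_le_one φ)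
  have hB : Real.log (Real.sin θ) < 0 := Real.log_neg hsθ hsθ1
  have hAB : Real.log (Real.sin θ) ≤ Real.log (Real.sin φ) := Real.log_le_log hsθ hsle
  rw [sub_pos, div_lt_div_iff₀ hb ha]
  nlinarith
end

section
/- Fix an integer $N \geq 2$ and let $\theta_j = \frac{2\pi j}{N}$. Define $h(x) = \sum_{j=1}^{N} \frac{1}{[1 + x^2 - 2x\cos(\frac{2j-1}{N}\pi)]^{1/2}} - \sum_{j=1}^{N} \frac{1}{[1 + x^2 - 2x\cos(\frac{2j}{N}\pi)]^{1/2}}$ for $x \in (0,1)$. Then $h(x) < 0$ and $h'(x) < 0$ for all $x \in (0,1)$. -/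
/-!
Let `F(z) = ∑ d_k z^k = (1 - z)^(-1/2)`, so that `(1 + x² - 2x cos θ)^(-1/2) = |F(x e^{iθ})|²`.
With `ζ = e^{iπ/N}`, splitting `F` along the residues of the exponent mod `2N` gives
`F(x ζ^k) = ∑_{r < 2N} ζ^{kr} B_r(x)`, where each `B_r` is a power series with nonnegative
coefficients. In the alternating sum of `|F(x ζ^k)|²` over `k = 1, …, 2N` the root-of-unity sums
cancel every pair `(r, s)` except those with `ζ^(r-s) = -1`, where they contribute `-2N`; thus
`h = -2N ∑_{r - s ≡ N} B_r B_s`. This is negative with negative derivative on `(0, 1)`, because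
all `B_r` are positive and nondecreasing there, and `B_N' > 0`.
-/

open Real Finset ComplexConjugate

-- `invSqrtCoeff k = (2k choose k) / 4^k`, the Taylor coefficients of `(1 - z)^(-1/2)`.
noncomputable def invSqrtCoeff : ℕ → ℝ
  | 0 => 1
  | k + 1 => invSqrtCoeff k * (2 * k + 1) / (2 * k + 2)

namespace invSqrtCoeff

lemma pos (k : ℕ) : 0 < invSqrtCoeff k := by
  induction k with
  | zero => norm_num [invSqrtCoeff]
  | succ k ih => rw [invSqrtCoeff]; positivity

lemma le_one (k : ℕ) : invSqrtCoeff k ≤ 1 := by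
  induction k with
  | zero => norm_num [invSqrtCoeff]
  | succ k ih =>
    rw [invSqrtCoeff, div_le_one (by positivity)]
    nlinarith [pos k]

lemma abs_le_one (k : ℕ) : |invSqrtCoeff k| ≤ 1 :=
  (abs_of_pos (pos k)).trans_le (le_one k)

lemma succ_mul (k : ℕ) :
    2 * ((k : ℝ) + 1) * invSqrtCoeff (k + 1) = (2 * k + 1) * invSqrtCoeff k := by
  rw [invSqrtCoeff]; field_simp

lemma sum_antidiagonal_natCast_mul (n : ℕ) :
    2 * ∑ p ∈ antidiagonal n, (p.1 : ℝ) * invSqrtCoeff p.1 * invSqrtCoeff p.2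
      = n * ∑ p ∈ antidiagonal n, invSqrtCoeff p.1 * invSqrtCoeff p.2 := by
  rw [two_mul]
  nth_rewrite 2 [← Nat.sum_antidiagonal_swap]
  rw [← sum_add_distrib, mul_sum]
  refine sum_congr rfl fun p hp => ?_
  have hn : (p.1 : ℝ) + p.2 = n := by exact_mod_cast mem_antidiagonal.mp hp
  simp only [Prod.fst_swap, Prod.snd_swap, ← hn]
  ring

lemma sum_antidiagonal_succ_natCast_mul (n : ℕ) :
    ∑ p ∈ antidiagonal (n + 1), (p.1 : ℝ) * invSqrtCoeff p.1 * invSqrtCoeff p.2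
      = ∑ p ∈ antidiagonal n, (p.1 : ℝ) * invSqrtCoeff p.1 * invSqrtCoeff p.2
        + (∑ p ∈ antidiagonal n, invSqrtCoeff p.1 * invSqrtCoeff p.2) / 2 := by
  rw [Nat.sum_antidiagonal_succ, Nat.cast_zero, zero_mul, zero_mul, zero_add, sum_div,
    ← sum_add_distrib]
  refine sum_congr rfl fun p _ => ?_
  push_cast
  linear_combination (invSqrtCoeff p.2 / 2) * succ_mul p.1

lemma sum_antidiagonal_mul (n : ℕ) :
    ∑ p ∈ antidiagonal n, invSqrtCoeff p.1 * invSqrtCoeff p.2 = 1 := by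
  induction n with
  | zero => simp [invSqrtCoeff]
  | succ n ih =>
    have h := sum_antidiagonal_natCast_mul (n + 1)
    rw [sum_antidiagonal_succ_natCast_mul, mul_add, sum_antidiagonal_natCast_mul, ih] at h
    push_cast at h
    nlinarith

end invSqrtCoeff

lemma summable_natCast_mul_pow_sub_one {b : ℝ} (hb : |b| < 1) :
    Summable (fun m : ℕ => (m : ℝ) * b ^ (m - 1)) := by
  rw [← summable_nat_add_iff 1]
  have hb' : ‖b‖ < 1 := by rwa [Real.norm_eq_abs]
  refine ((summable_pow_mul_geometric_of_norm_lt_one 1 hb').add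
    (summable_geometric_of_norm_lt_one hb')).congr fun m => ?_
  push_cast
  ring

section PowerSeries

variable {c : ℕ → ℝ} {x : ℝ}

lemma summable_mul_pow_of_abs_le_one (hc : ∀ m, |c m| ≤ 1) (hx : |x| < 1) :
    Summable (fun m => c m * x ^ m) := by
  refine Summable.of_norm_bounded (summable_geometric_of_lt_one (abs_nonneg x) hx) fun m => ?_
  rw [Real.norm_eq_abs, abs_mul, abs_pow]
  exact mul_le_of_le_one_left (by positivity) (hc m)

lemma norm_mul_natCast_mul_pow_sub_one_le (hc : ∀ m, |c m| ≤ 1) (m : ℕ) {y b : ℝ}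
    (hy : |y| ≤ b) : ‖c m * (m * y ^ (m - 1))‖ ≤ m * b ^ (m - 1) := by
  rw [Real.norm_eq_abs, abs_mul, abs_mul, Nat.abs_cast, abs_pow]
  refine mul_le_of_le_one_left (by positivity) (hc m) |>.trans ?_
  gcongr

lemma summable_mul_natCast_mul_pow_sub_one (hc : ∀ m, |c m| ≤ 1) (hx : |x| < 1) :
    Summable (fun m => c m * (m * x ^ (m - 1))) :=
  .of_norm_bounded (summable_natCast_mul_pow_sub_one (b := |x|) (by rwa [abs_abs]))
    fun m => norm_mul_natCast_mul_pow_sub_one_le hc m le_rfl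

lemma hasDerivAt_tsum_mul_pow (hc : ∀ m, |c m| ≤ 1) (hx : |x| < 1) :
    HasDerivAt (fun y => ∑' m, c m * y ^ m) (∑' m, c m * (m * x ^ (m - 1))) x := by
  obtain ⟨b, hxb, hb1⟩ := exists_between hx
  have hb : |b| < 1 := abs_lt.mpr ⟨by linarith [abs_nonneg x], hb1⟩
  refine hasDerivAt_tsum_of_isPreconnected (summable_natCast_mul_pow_sub_one hb)
    Metric.isOpen_ball (convex_ball 0 b).isPreconnected
    (fun m y _ => (hasDerivAt_pow m y).const_mul (c m))
    (fun m y hy => norm_mul_natCast_mul_pow_sub_one_le hc m ?_)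
    (Metric.mem_ball_self ((abs_nonneg x).trans_lt hxb))
    (summable_mul_pow_of_abs_le_one hc (by simp)) (by simpa using hxb)
  rw [mem_ball_zero_iff, Real.norm_eq_abs] at hy
  exact hy.le

lemma abs_lt_one_of_mem_Ioo (hx : x ∈ Set.Ioo (0 : ℝ) 1) : |x| < 1 :=
  abs_lt.mpr ⟨by linarith [hx.1], hx.2⟩

lemma tsum_mul_pow_pos (hc : ∀ m, |c m| ≤ 1) (hc0 : ∀ m, 0 ≤ c m) {m₀ : ℕ} (hm₀ : 0 < c m₀)
    (hx : x ∈ Set.Ioo (0 : ℝ) 1) : 0 < ∑' m, c m * x ^ m :=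
  (summable_mul_pow_of_abs_le_one hc (abs_lt_one_of_mem_Ioo hx)).tsum_pos
    (fun m => mul_nonneg (hc0 m) (pow_nonneg hx.1.le m)) m₀ (mul_pos hm₀ (pow_pos hx.1 m₀))

lemma tsum_mul_natCast_mul_pow_sub_one_nonneg (hc0 : ∀ m, 0 ≤ c m) (hx : 0 ≤ x) :
    0 ≤ ∑' m, c m * (m * x ^ (m - 1)) :=
  tsum_nonneg fun m => by have := hc0 m; positivity

lemma tsum_mul_natCast_mul_pow_sub_one_pos (hc : ∀ m, |c m| ≤ 1) (hc0 : ∀ m, 0 ≤ c m)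
    {m₀ : ℕ} (hm₀ : 0 < c m₀) (hm₀_ne : m₀ ≠ 0) (hx : x ∈ Set.Ioo (0 : ℝ) 1) :
    0 < ∑' m, c m * (m * x ^ (m - 1)) := by
  have := hx.1
  refine (summable_mul_natCast_mul_pow_sub_one hc (abs_lt_one_of_mem_Ioo hx)).tsum_pos
    (fun m => by have := hc0 m; positivity) m₀ ?_
  have : (0 : ℝ) < m₀ := by exact_mod_cast Nat.pos_of_ne_zero hm₀_ne
  positivity

end PowerSeries

def multisection (a : ℕ → ℝ) (M r m : ℕ) : ℝ := if m % M = r then a m else 0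

lemma abs_multisection_le (a : ℕ → ℝ) (M r m : ℕ) : |multisection a M r m| ≤ |a m| := by
  unfold multisection; split_ifs <;> simp

lemma multisection_nonneg {a : ℕ → ℝ} (ha : ∀ m, 0 ≤ a m) (M r m : ℕ) :
    0 ≤ multisection a M r m := by
  unfold multisection; split_ifs <;> simp [ha]

lemma multisection_self {a : ℕ → ℝ} {M r : ℕ} (hr : r < M) : multisection a M r r = a r := by
  simp [multisection, Nat.mod_eq_of_lt hr]

lemma sum_range_pow_mul_multisection {a : ℕ → ℝ} {M : ℕ} (hM : 0 < M) {w : ℂ} (hw : w ^ M = 1)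
    (m : ℕ) : ∑ r ∈ range M, w ^ r * (multisection a M r m : ℂ) = w ^ m * a m := by
  simp [multisection, apply_ite (fun t : ℝ => (t : ℂ)), mul_ite, Nat.mod_lt m hM,
    ← pow_eq_pow_mod m hw]

noncomputable def invSqrtSeries (z : ℂ) : ℂ := ∑' k, (invSqrtCoeff k : ℂ) * z ^ k

noncomputable def invSqrtSection (M r : ℕ) (x : ℝ) : ℝ :=
  ∑' m, multisection invSqrtCoeff M r m * x ^ m

section invSqrtSection

variable {M r : ℕ} {x : ℝ}

lemma abs_multisection_invSqrtCoeff_le_one (M r m : ℕ) :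
    |multisection invSqrtCoeff M r m| ≤ 1 :=
  (abs_multisection_le _ M r m).trans (invSqrtCoeff.abs_le_one m)

lemma multisection_invSqrtCoeff_nonneg (M r m : ℕ) : 0 ≤ multisection invSqrtCoeff M r m :=
  multisection_nonneg (fun k => (invSqrtCoeff.pos k).le) M r m

lemma summable_invSqrtSeries {z : ℂ} (hz : ‖z‖ < 1) :
    Summable (fun k => (invSqrtCoeff k : ℂ) * z ^ k) := by
  refine .of_norm_bounded (summable_geometric_of_lt_one (norm_nonneg z) hz) fun k => ?_
  rw [norm_mul, norm_pow, Complex.norm_real, Real.norm_eq_abs]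
  exact mul_le_of_le_one_left (by positivity) (invSqrtCoeff.abs_le_one k)

lemma invSqrtSeries_sq {z : ℂ} (hz : ‖z‖ < 1) : invSqrtSeries z ^ 2 = (1 - z)⁻¹ := by
  have hs := (summable_invSqrtSeries hz).norm
  rw [sq, invSqrtSeries, tsum_mul_tsum_eq_tsum_sum_antidiagonal_of_summable_norm hs hs,
    ← tsum_geometric_of_norm_lt_one hz]
  refine tsum_congr fun n => ?_
  calc ∑ p ∈ antidiagonal n, (invSqrtCoeff p.1 : ℂ) * z ^ p.1 * ((invSqrtCoeff p.2 : ℂ) * z ^ p.2)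
      = ((∑ p ∈ antidiagonal n, invSqrtCoeff p.1 * invSqrtCoeff p.2 : ℝ) : ℂ) * z ^ n := by
        push_cast
        rw [sum_mul]
        refine sum_congr rfl fun p hp => ?_
        rw [← mem_antidiagonal.mp hp, pow_add]
        ring
    _ = z ^ n := by rw [invSqrtCoeff.sum_antidiagonal_mul, Complex.ofReal_one, one_mul]

lemma norm_invSqrtSeries_sq {z : ℂ} (hz : ‖z‖ < 1) : ‖invSqrtSeries z‖ ^ 2 = ‖1 - z‖⁻¹ := by
  rw [← norm_pow, invSqrtSeries_sq hz, norm_inv]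

lemma invSqrtSeries_ofReal_mul_eq_sum (hM : 0 < M) {w : ℂ} (hw : w ^ M = 1) (hx : |x| < 1) :
    invSqrtSeries (x * w) = ∑ r ∈ range M, w ^ r * (invSqrtSection M r x : ℂ) := by
  have hsummable (r : ℕ) : Summable fun m => multisection invSqrtCoeff M r m * x ^ m :=
    summable_mul_pow_of_abs_le_one (abs_multisection_invSqrtCoeff_le_one M r) hx
  simp_rw [invSqrtSection, Complex.ofReal_tsum, ← tsum_mul_left]
  rw [← Summable.tsum_finsetSum fun r _ => (Complex.summable_ofReal.mpr (hsummable r)).mul_left _,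
    invSqrtSeries]
  refine tsum_congr fun m => ?_
  push_cast
  simp_rw [← mul_assoc, ← sum_mul, sum_range_pow_mul_multisection hM hw]
  ring

lemma rpow_neg_half_eq_norm_invSqrtSeries_sq (hx : |x| < 1) (θ : ℝ) :
    (1 + x ^ 2 - 2 * x * cos θ) ^ (-(1 : ℝ) / 2)
      = ‖invSqrtSeries (x * Complex.exp (θ * Complex.I))‖ ^ 2 := by
  have hz : ‖(x * Complex.exp (θ * Complex.I) : ℂ)‖ < 1 := by
    rwa [norm_mul, Complex.norm_exp_ofReal_mul_I, mul_one, Complex.norm_real]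
  have hnormSq :
      Complex.normSq (1 - x * Complex.exp (θ * Complex.I)) = 1 + x ^ 2 - 2 * x * cos θ := by
    rw [Complex.normSq_apply]
    simp only [Complex.sub_re, Complex.one_re, Complex.mul_re, Complex.ofReal_re,
      Complex.exp_ofReal_mul_I_re, Complex.ofReal_im, Complex.exp_ofReal_mul_I_im, zero_mul,
      sub_zero, Complex.sub_im, Complex.one_im, Complex.mul_im, add_zero, zero_sub, mul_neg,
      neg_mul, neg_neg]
    nlinarith [sin_sq_add_cos_sq θ]
  rw [norm_invSqrtSeries_sq hz, Complex.norm_def, hnormSq, neg_div,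
    rpow_neg (hnormSq ▸ Complex.normSq_nonneg _), sqrt_eq_rpow]

lemma ofReal_norm_invSqrtSeries_sq_eq_sum (hM : 0 < M) {w : ℂ} (hw : w ^ M = 1) (hx : |x| < 1) :
    ((‖invSqrtSeries (x * w)‖ ^ 2 : ℝ) : ℂ) = ∑ p ∈ range M ×ˢ range M,
      w ^ p.1 * conj w ^ p.2 * (invSqrtSection M p.1 x * invSqrtSection M p.2 x : ℝ) := by
  rw [← Complex.normSq_eq_norm_sq, ← Complex.mul_conj, invSqrtSeries_ofReal_mul_eq_sum hM hw hx,
    map_sum, sum_mul_sum, sum_product]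
  refine sum_congr rfl fun r _ => sum_congr rfl fun s _ => ?_
  simp only [map_mul, map_pow, Complex.conj_ofReal]
  push_cast
  ring

lemma invSqrtSection_pos (hr : r < M) (hx : x ∈ Set.Ioo (0 : ℝ) 1) : 0 < invSqrtSection M r x :=
  tsum_mul_pow_pos (abs_multisection_invSqrtCoeff_le_one M r)
    (multisection_invSqrtCoeff_nonneg M r) (m₀ := r)
    (by rw [multisection_self hr]; exact invSqrtCoeff.pos r) hx

lemma hasDerivAt_invSqrtSection (M r : ℕ) (hx : |x| < 1) :
    HasDerivAt (invSqrtSection M r)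
      (∑' m, multisection invSqrtCoeff M r m * (m * x ^ (m - 1))) x :=
  hasDerivAt_tsum_mul_pow (abs_multisection_invSqrtCoeff_le_one M r) hx

lemma deriv_invSqrtSection_nonneg (M r : ℕ) (hx : x ∈ Set.Ioo (0 : ℝ) 1) :
    0 ≤ deriv (invSqrtSection M r) x := by
  rw [(hasDerivAt_invSqrtSection M r (abs_lt_one_of_mem_Ioo hx)).deriv]
  exact tsum_mul_natCast_mul_pow_sub_one_nonneg (multisection_invSqrtCoeff_nonneg M r) hx.1.le

lemma deriv_invSqrtSection_pos (hr : r < M) (hr0 : r ≠ 0) (hx : x ∈ Set.Ioo (0 : ℝ) 1) :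
    0 < deriv (invSqrtSection M r) x := by
  rw [(hasDerivAt_invSqrtSection M r (abs_lt_one_of_mem_Ioo hx)).deriv]
  exact tsum_mul_natCast_mul_pow_sub_one_pos (abs_multisection_invSqrtCoeff_le_one M r)
    (multisection_invSqrtCoeff_nonneg M r) (m₀ := r)
    (by rw [multisection_self hr]; exact invSqrtCoeff.pos r) hr0 hx

end invSqrtSection

lemma one_add_mul_sum_Icc_pow_sub {R : Type*} [CommRing R] (η : R) (n : ℕ) :
    (1 + η) * ∑ j ∈ Icc 1 n, (η ^ (2 * j - 1) - η ^ (2 * j)) = η * (1 - η ^ (2 * n)) := by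
  induction n with
  | zero => simp
  | succ n ih =>
    rw [sum_Icc_succ_top (by omega), mul_add, ih, show 2 * (n + 1) - 1 = 2 * n + 1 by omega]
    ring

lemma sum_Icc_pow_sub_of_pow_eq_one {R : Type*} [CommRing R] [NoZeroDivisors R] [DecidableEq R]
    {η : R} {n : ℕ} (hη : η ^ (2 * n) = 1) :
    ∑ j ∈ Icc 1 n, (η ^ (2 * j - 1) - η ^ (2 * j)) = if η = -1 then -(2 * (n : R)) else 0 := by
  split_ifs with h
  · subst h
    rw [sum_congr rfl fun j hj => show (-1 : R) ^ (2 * j - 1) - (-1) ^ (2 * j) = -2 by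
      rw [Odd.neg_one_pow ⟨j - 1, by have := (mem_Icc.mp hj).1; omega⟩,
        Even.neg_one_pow ⟨j, by ring⟩]; ring]
    simp [mul_comm]
  · have := one_add_mul_sum_Icc_pow_sub η n
    rw [hη, sub_self, mul_zero] at this
    exact (mul_eq_zero.mp this).resolve_left fun h' => h (by linear_combination h')

noncomputable def expPiIDiv (N : ℕ) : ℂ := Complex.exp (π / N * Complex.I)

lemma exp_mul_I_eq_expPiIDiv_pow (N k : ℕ) :
    Complex.exp (↑(k * π / N) * Complex.I) = expPiIDiv N ^ k := by
  rw [expPiIDiv, ← Complex.exp_nat_mul]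
  push_cast
  ring_nf

lemma expPiIDiv_pow_self {N : ℕ} (hN : N ≠ 0) : expPiIDiv N ^ N = -1 := by
  rw [← exp_mul_I_eq_expPiIDiv_pow, mul_div_cancel_left₀ π (Nat.cast_ne_zero.mpr hN),
    Complex.exp_pi_mul_I]

lemma expPiIDiv_pow_two_mul {N : ℕ} (hN : N ≠ 0) : expPiIDiv N ^ (2 * N) = 1 := by
  rw [mul_comm, pow_mul, expPiIDiv_pow_self hN]
  norm_num

noncomputable def oppositePairs (N : ℕ) : Finset (ℕ × ℕ) :=
  (range (2 * N) ×ˢ range (2 * N)).filter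
    fun p => expPiIDiv N ^ p.1 * conj (expPiIDiv N) ^ p.2 = -1

noncomputable def oppositeSectionSum (N : ℕ) (x : ℝ) : ℝ :=
  ∑ p ∈ oppositePairs N, invSqrtSection (2 * N) p.1 x * invSqrtSection (2 * N) p.2 x

lemma rpow_neg_half_eq_sum_pow {N : ℕ} (hN : N ≠ 0) {x : ℝ} (hx : |x| < 1) (k : ℕ) :
    (((1 + x ^ 2 - 2 * x * cos (k * π / N)) ^ (-(1 : ℝ) / 2) : ℝ) : ℂ)
      = ∑ p ∈ range (2 * N) ×ˢ range (2 * N), (expPiIDiv N ^ p.1 * conj (expPiIDiv N) ^ p.2) ^ k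
        * (invSqrtSection (2 * N) p.1 x * invSqrtSection (2 * N) p.2 x : ℝ) := by
  have hw : (expPiIDiv N ^ k) ^ (2 * N) = 1 := by
    rw [pow_right_comm, expPiIDiv_pow_two_mul hN, one_pow]
  rw [rpow_neg_half_eq_norm_invSqrtSeries_sq hx, exp_mul_I_eq_expPiIDiv_pow,
    ofReal_norm_invSqrtSeries_sq_eq_sum (by omega) hw hx]
  simp only [map_pow, mul_pow, ← pow_mul, mul_comm k]

lemma sum_odd_sub_sum_even_eq {N : ℕ} (hN : N ≠ 0) {x : ℝ} (hx : |x| < 1) :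
    ∑ j ∈ Icc 1 N, (1 + x ^ 2 - 2 * x * cos ((2 * j - 1) * π / N)) ^ (-(1 : ℝ) / 2)
      - ∑ j ∈ Icc 1 N, (1 + x ^ 2 - 2 * x * cos ((2 * j) * π / N)) ^ (-(1 : ℝ) / 2)
      = -(2 * N) * oppositeSectionSum N x := by
  have heven (j : ℕ) : (2 * j : ℝ) = (2 * j : ℕ) := by push_cast; ring
  have hodd : ∀ j ∈ Icc 1 N, ((2 * j : ℕ) : ℝ) - 1 = (2 * j - 1 : ℕ) := fun j hj => by
    rw [Nat.cast_sub (by have := (mem_Icc.mp hj).1; omega), Nat.cast_one]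
  apply Complex.ofReal_injective
  rw [Complex.ofReal_sub, Complex.ofReal_sum, Complex.ofReal_sum, ← sum_sub_distrib]
  simp_rw [heven]
  rw [sum_congr rfl fun j hj => by
    rw [hodd j hj, rpow_neg_half_eq_sum_pow hN hx, rpow_neg_half_eq_sum_pow hN hx]]
  simp_rw [← sum_sub_distrib, ← sub_mul]
  rw [sum_comm]
  simp_rw [← sum_mul]
  have hη (p : ℕ × ℕ) : (expPiIDiv N ^ p.1 * conj (expPiIDiv N) ^ p.2) ^ (2 * N) = 1 := by
    rw [mul_pow, ← map_pow, ← map_pow, pow_right_comm, pow_right_comm _ p.2,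
      expPiIDiv_pow_two_mul hN]
    simp
  simp_rw [sum_Icc_pow_sub_of_pow_eq_one (hη _), oppositeSectionSum, oppositePairs, sum_filter,
    mul_sum]
  push_cast
  refine sum_congr rfl fun p _ => ?_
  split_ifs <;> simp

section oppositeSectionSum

variable {N : ℕ} {x : ℝ}

lemma mem_oppositePairs (hN : N ≠ 0) : (N, 0) ∈ oppositePairs N :=
  mem_filter.mpr ⟨mem_product.mpr ⟨mem_range.mpr (by omega), mem_range.mpr (by omega)⟩,
    by simp [expPiIDiv_pow_self hN]⟩

lemma lt_of_mem_oppositePairs {p : ℕ × ℕ} (hp : p ∈ oppositePairs N) :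
    p.1 < 2 * N ∧ p.2 < 2 * N := by
  simpa [oppositePairs] using (mem_filter.mp hp).1

lemma oppositeSectionSum_pos (hN : N ≠ 0) (hx : x ∈ Set.Ioo (0 : ℝ) 1) :
    0 < oppositeSectionSum N x :=
  sum_pos (fun _ hp => mul_pos (invSqrtSection_pos (lt_of_mem_oppositePairs hp).1 hx)
    (invSqrtSection_pos (lt_of_mem_oppositePairs hp).2 hx)) ⟨_, mem_oppositePairs hN⟩

lemma hasDerivAt_oppositeSectionSum (hx : |x| < 1) :
    HasDerivAt (oppositeSectionSum N) (∑ p ∈ oppositePairs N,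
      (deriv (invSqrtSection (2 * N) p.1) x * invSqrtSection (2 * N) p.2 x
        + invSqrtSection (2 * N) p.1 x * deriv (invSqrtSection (2 * N) p.2) x)) x := by
  unfold oppositeSectionSum
  exact HasDerivAt.fun_sum fun p _ =>
    (hasDerivAt_invSqrtSection _ p.1 hx).differentiableAt.hasDerivAt.mul
      (hasDerivAt_invSqrtSection _ p.2 hx).differentiableAt.hasDerivAt

lemma deriv_oppositeSectionSum_pos (hN : N ≠ 0) (hx : x ∈ Set.Ioo (0 : ℝ) 1) :
    0 < deriv (oppositeSectionSum N) x := by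
  rw [(hasDerivAt_oppositeSectionSum (abs_lt_one_of_mem_Ioo hx)).deriv]
  refine sum_pos' (fun p hp => ?_) ⟨_, mem_oppositePairs hN, ?_⟩
  · have := invSqrtSection_pos (lt_of_mem_oppositePairs hp).1 hx
    have := invSqrtSection_pos (lt_of_mem_oppositePairs hp).2 hx
    have := deriv_invSqrtSection_nonneg (2 * N) p.1 hx
    have := deriv_invSqrtSection_nonneg (2 * N) p.2 hx
    positivity
  · have := deriv_invSqrtSection_pos (by omega : N < 2 * N) hN hx
    have := invSqrtSection_pos (by omega : 0 < 2 * N) hx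
    have := invSqrtSection_pos (by omega : N < 2 * N) hx
    have := deriv_invSqrtSection_nonneg (2 * N) 0 hx
    positivity

end oppositeSectionSum

theorem stmt13 (N : ℕ) (hN : 2 ≤ N)
    (h : ℝ → ℝ)
    (hdef : ∀ x : ℝ, h x =
      ∑ j ∈ Finset.Icc 1 N, (1 + x ^ 2 - 2 * x * Real.cos ((2 * j - 1) * π / N)) ^ (-(1:ℝ)/2)
      - ∑ j ∈ Finset.Icc 1 N, (1 + x ^ 2 - 2 * x * Real.cos ((2 * j) * π / N)) ^ (-(1:ℝ)/2))
    (x : ℝ) (hx : x ∈ Set.Ioo (0:ℝ) 1) :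
    h x < 0 ∧ deriv h x < 0 := by
  have hN0 : N ≠ 0 := by omega
  have hh : ∀ y ∈ Set.Ioo (0 : ℝ) 1, h y = -(2 * N) * oppositeSectionSum N y := fun y hy =>
    (hdef y).trans (sum_odd_sub_sum_even_eq hN0 (abs_lt_one_of_mem_Ioo hy))
  have hcoeff : -(2 * N : ℝ) < 0 :=
    neg_neg_of_pos (mul_pos two_pos (Nat.cast_pos.mpr (by omega)))
  have hderiv : deriv h x = -(2 * N) * deriv (oppositeSectionSum N) x := by
    rw [(Filter.eventuallyEq_of_mem (isOpen_Ioo.mem_nhds hx) hh).deriv_eq]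
    exact deriv_const_mul _ (hasDerivAt_oppositeSectionSum
      (abs_lt_one_of_mem_Ioo hx)).differentiableAt
  rw [hh x hx, hderiv]
  exact ⟨mul_neg_of_neg_of_pos hcoeff (oppositeSectionSum_pos hN0 hx),
    mul_neg_of_neg_of_pos hcoeff (deriv_oppositeSectionSum_pos hN0 hx)⟩
end

section
/- Let $N \geq 1$ be an integer, $a > 0$, $h \geq 0$ real. Suppose $\theta$ is a real number satisfying $\sum_{j=1}^{N} \frac{\sin(\frac{2\pi j}{N} + \theta)}{[1 + a^2 - 2a\cos(\frac{2\pi j}{N} + \theta) + h^2]^{3/2}} = 0$, excluding the collision case ($a = 1$, $h = 0$, and $\cos(\frac{2\pi j}{N} + \theta) = 1$ for some $j$). Then $\theta \equiv \frac{j\pi}{N} \pmod{2\pi}$ for some integer $j$ with $1 \leq j \leq 2N$. -/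
/-!
Write `x_j = 2πj/N + θ`, `c = 1 + a² + h²` and `f u = (c - 2au) ^ (-3/2)`, so that the sum is
`∑ sin x_j * f (cos x_j)`. If the nodes `cos x_j` are pairwise distinct, `f` may be replaced by its
Lagrange interpolant `P` of degree `< N`. Since `sin x * U_k (cos x) = sin ((k + 1) x)` for the
Chebyshev polynomials `U_k` of the second kind, and `∑ sin (m x_j)` vanishes for `0 < m < N`, the
sum equals `N sin (Nθ)` times the coefficient of `X ^ (N - 1)` in `P` divided by `2 ^ (N - 1)`.
By repeated Rolle applied to `f - P`, that coefficient is `f^(N-1)(ξ) / (N - 1)!` for some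
`ξ < c / 2a`; it is positive because every derivative of `f` is positive there, and the
non-collision condition puts all nodes there. Hence `sin (Nθ) = 0`. If two nodes coincide instead,
`cos x_i = cos x_j` with `i ≠ j` forces `x_i + x_j ∈ 2πℤ`, so again `θ ∈ (π/N)ℤ`.
-/

open Real Polynomial Finset

lemma sum_sin_nat_mul_eq_zero {N m : ℕ} (hm : 0 < m) (hmN : m < N) (θ : ℝ) :
    ∑ j ∈ Icc 1 N, sin (m * (2 * π * j / N + θ)) = 0 := by
  set α := 2 * π * m / N
  have hN : (N : ℝ) ≠ 0 := by exact_mod_cast (show N ≠ 0 by omega)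
  have hα : sin (α / 2) ≠ 0 := by
    have hlt : π * m / N < π := by
      rw [div_lt_iff₀ (by positivity)]
      gcongr
    have := sin_pos_of_pos_of_lt_pi (by positivity) hlt
    rw [show α / 2 = π * m / N by simp only [α]; ring]
    exact this.ne'
  have hshift : ∀ i : ℕ, sin (m * (2 * π * (1 + i : ℕ) / N + θ)) = sin (α * i + (m * θ + α)) := by
    intro i; congr 1; push_cast; ring
  have := sin_mul_sum_sin N α (m * θ + α)
  rw [show N * α / 2 = m * π by simp only [α]; field_simp, sin_nat_mul_pi, zero_mul] at this
  rw [← Ico_add_one_right_eq_Icc, sum_Ico_eq_sum_range, Nat.add_sub_cancel,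
    sum_congr rfl fun i _ => hshift i]
  exact (mul_eq_zero.mp this).resolve_left hα

lemma sum_sin_self_mul {N : ℕ} (hN : N ≠ 0) (θ : ℝ) :
    ∑ j ∈ Icc 1 N, sin (N * (2 * π * j / N + θ)) = N * sin (N * θ) := by
  have hperiodic : ∀ j : ℕ, sin (N * (2 * π * j / N + θ)) = sin (N * θ) := by
    intro j
    rw [show (N : ℝ) * (2 * π * j / N + θ) = N * θ + j * (2 * π) by field_simp; ring]
    exact sin_add_nat_mul_two_pi _ j
  simp [hperiodic]

lemma sum_sin_mul_eval_U {N k : ℕ} (hk : k < N) (θ : ℝ) :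
    ∑ j ∈ Icc 1 N, sin (2 * π * j / N + θ) * (Chebyshev.U ℝ k).eval (cos (2 * π * j / N + θ)) =
      if k + 1 = N then N * sin (N * θ) else 0 := by
  have hU : ∀ x : ℝ, sin x * (Chebyshev.U ℝ k).eval (cos x) = sin ((k + 1 : ℕ) * x) := by
    intro x; rw [mul_comm, Chebyshev.U_real_cos]; push_cast; rfl
  simp only [hU]
  split_ifs with h
  · subst h; exact sum_sin_self_mul (by omega) θ
  · exact sum_sin_nat_mul_eq_zero (by omega) (by omega) θ

lemma coeff_U_natCast_of_le {R : Type*} [CommRing R] [IsDomain R] [NeZero (2 : R)] {k m : ℕ}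
    (h : k ≤ m) : (Chebyshev.U R k).coeff m = if m = k then 2 ^ k else 0 := by
  split_ifs with hm
  · subst hm
    simpa using (Chebyshev.U R m).coeff_natDegree
  · exact coeff_eq_zero_of_natDegree_lt (by simp; omega)

lemma sum_sin_mul_eval_cos {N : ℕ} (θ : ℝ) {P : ℝ[X]} (hP : P.natDegree < N) :
    ∑ j ∈ Icc 1 N, sin (2 * π * j / N + θ) * P.eval (cos (2 * π * j / N + θ)) =
      P.coeff (N - 1) / 2 ^ (N - 1) * (N * sin (N * θ)) := by
  have hU : ∀ k < N, ∀ c : ℝ, ∑ j ∈ Icc 1 N, sin (2 * π * j / N + θ) *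
      (C c * Chebyshev.U ℝ k).eval (cos (2 * π * j / N + θ)) =
      (C c * Chebyshev.U ℝ k).coeff (N - 1) / 2 ^ (N - 1) * (N * sin (N * θ)) := by
    intro k hk c
    simp only [eval_mul, eval_C, mul_left_comm _ c, ← mul_sum, sum_sin_mul_eval_U hk, coeff_C_mul,
      coeff_U_natCast_of_le (show k ≤ N - 1 by omega)]
    split_ifs with h₁ h₂ <;> first | omega | (subst h₂; field_simp) | simp
  suffices ∀ d < N, ∀ P : ℝ[X], P.natDegree ≤ d → ∑ j ∈ Icc 1 N, sin (2 * π * j / N + θ) *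
      P.eval (cos (2 * π * j / N + θ)) =
      P.coeff (N - 1) / 2 ^ (N - 1) * (N * sin (N * θ)) from this _ hP P le_rfl
  intro d
  induction d with
  | zero =>
    intro hN P hP
    rw [eq_C_of_natDegree_le_zero hP, ← mul_one (C _), ← Chebyshev.U_zero (R := ℝ)]
    exact hU 0 hN _
  | succ d ih =>
    intro hd P hP
    set c := P.coeff (d + 1) / 2 ^ (d + 1)
    set Q := P - C c * Chebyshev.U ℝ (d + 1 : ℕ)
    have hQ : Q.natDegree ≤ d := by
      refine natDegree_le_iff_coeff_eq_zero.mpr fun m hm => ?_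
      simp only [Q, coeff_sub, coeff_C_mul, coeff_U_natCast_of_le (show d + 1 ≤ m by omega)]
      split_ifs with hm'
      · simp [c, hm']
      · simp [coeff_eq_zero_of_natDegree_lt (show P.natDegree < m by omega)]
    rw [show P = Q + C c * Chebyshev.U ℝ (d + 1 : ℕ) by simp [Q]]
    simp only [eval_add, mul_add, sum_add_distrib, coeff_add, add_div, add_mul, ih (by omega) Q hQ,
      hU (d + 1) hd c]

theorem exists_eq_zero_of_hasDerivAt_succ {s : Set ℝ} (hs : s.OrdConnected) {F : ℕ → ℝ → ℝ}
    (hF : ∀ k, ∀ x ∈ s, HasDerivAt (F k) (F (k + 1) x) x) (n : ℕ) {z : Fin (n + 1) → ℝ}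
    (hz : StrictMono z) (hzs : ∀ i, z i ∈ s) (hz0 : ∀ i, F 0 (z i) = 0) :
    ∃ ξ ∈ s, F n ξ = 0 := by
  induction n generalizing F with
  | zero => exact ⟨z 0, hzs 0, hz0 0⟩
  | succ n ih =>
    have hRolle : ∀ i : Fin (n + 1), ∃ w ∈ Set.Ioo (z i.castSucc) (z i.succ), F 1 w = 0 := by
      intro i
      have hsub : Set.Icc (z i.castSucc) (z i.succ) ⊆ s := hs.out (hzs _) (hzs _)
      have hcont : ContinuousOn (F 0) (Set.Icc (z i.castSucc) (z i.succ)) :=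
        fun x hx => (hF 0 x (hsub hx)).continuousAt.continuousWithinAt
      exact exists_hasDerivAt_eq_zero (hz i.castSucc_lt_succ) hcont (by rw [hz0, hz0])
        fun x hx => hF 0 x (hsub (Set.Ioo_subset_Icc_self hx))
    choose w hw hw0 using hRolle
    have hw_mono : StrictMono w := fun i j hij =>
      calc w i < z i.succ := (hw i).2
        _ ≤ z j.castSucc := hz.monotone (Fin.succ_le_castSucc_iff.mpr hij)
        _ < w j := (hw j).1
    have hws : ∀ i, w i ∈ s := fun i =>
      hs.out (hzs _) (hzs _) (Set.Ioo_subset_Icc_self (hw i))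
    exact ih (F := fun k => F (k + 1)) (fun k => hF (k + 1)) hw_mono hws hw0

lemma natDegree_interpolate_le {K ι : Type*} [Field K] [DecidableEq ι] {t : Finset ι}
    {v : ι → K} (hv : Set.InjOn v t) (r : ι → K) : (Lagrange.interpolate t v r).natDegree ≤ #t - 1 :=
  natDegree_le_of_degree_le (Lagrange.degree_interpolate_le r hv)

theorem coeff_interpolate_pos {ι : Type*} [DecidableEq ι] {t : Finset ι} {v : ι → ℝ}
    (hv : Set.InjOn v t) {n : ℕ} (ht : #t = n + 1) {s : Set ℝ} (hs : s.OrdConnected)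
    (hvs : ∀ i ∈ t, v i ∈ s) {F : ℕ → ℝ → ℝ} (hF : ∀ k, ∀ x ∈ s, HasDerivAt (F k) (F (k + 1) x) x)
    (hFn : ∀ x ∈ s, 0 < F n x) :
    0 < (Lagrange.interpolate t v (fun i => F 0 (v i))).coeff n := by
  set P := Lagrange.interpolate t v (fun i => F 0 (v i))
  have hP : P.natDegree ≤ n :=
    (natDegree_interpolate_le hv _).trans_eq (by rw [ht, Nat.add_sub_cancel])
  have hPn : derivative^[n] P = C (n.factorial * P.coeff n) := by
    rw [eq_C_of_natDegree_le_zero ((natDegree_iterate_derivative P n).trans (by omega)),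
      coeff_iterate_derivative, zero_add, Nat.descFactorial_self, nsmul_eq_mul]
  set G : ℕ → ℝ → ℝ := fun k x => F k x - (derivative^[k] P).eval x
  have hG : ∀ k, ∀ x ∈ s, HasDerivAt (G k) (G (k + 1) x) x := by
    intro k x hx
    refine (hF k x hx).sub ?_
    rw [Function.iterate_succ_apply']
    exact (derivative^[k] P).hasDerivAt x
  have himage : #(t.image v) = n + 1 := by rw [card_image_of_injOn hv, ht]
  set z := (t.image v).orderEmbOfFin himage
  have hz : ∀ i, ∃ j ∈ t, v j = z i := fun i => mem_image.mp (orderEmbOfFin_mem _ himage i)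
  obtain ⟨ξ, hξs, hξ⟩ := exists_eq_zero_of_hasDerivAt_succ hs hG n z.strictMono
    (fun i => by obtain ⟨j, hj, hjz⟩ := hz i; exact hjz ▸ hvs j hj)
    (fun i => by
      obtain ⟨j, hj, hjz⟩ := hz i
      simp only [G, ← hjz, P, Function.iterate_zero_apply,
        Lagrange.eval_interpolate_at_node _ hv hj, sub_self])
  have hFξ : F n ξ = n.factorial * P.coeff n := by
    simpa [G, hPn, sub_eq_zero] using hξ
  exact pos_of_mul_pos_right (hFξ ▸ hFn ξ hξs) (by positivity)

lemma hasDerivAt_prod_mul_sub_rpow (b c s : ℝ) (k : ℕ) {x : ℝ} (hx : b * x < c) :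
    HasDerivAt (fun u => (∏ i ∈ range k, (s + i)) * b ^ k * (c - b * u) ^ (-s - k))
      ((∏ i ∈ range (k + 1), (s + i)) * b ^ (k + 1) * (c - b * x) ^ (-s - (k + 1 : ℕ))) x := by
  have hlin : HasDerivAt (fun u => c - b * u) (-b) x := by
    simpa using ((hasDerivAt_id x).const_mul b).const_sub c
  have := ((hasDerivAt_rpow_const (p := -s - k) (Or.inl (sub_pos.mpr hx).ne')).comp x
    hlin).const_mul ((∏ i ∈ range k, (s + i)) * b ^ k)
  refine this.congr_deriv ?_
  rw [prod_range_succ]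
  push_cast
  ring_nf

lemma sin_nat_mul_eq_zero_of_sum_eq_zero {N : ℕ} {a c θ : ℝ} (ha : 0 < a)
    (hinj : Set.InjOn (fun j : ℕ => cos (2 * π * j / N + θ)) (Icc 1 N))
    (hlt : ∀ j ∈ Icc 1 N, 2 * a * cos (2 * π * j / N + θ) < c)
    (hsum : ∑ j ∈ Icc 1 N, sin (2 * π * j / N + θ) /
      (c - 2 * a * cos (2 * π * j / N + θ)) ^ ((3 : ℝ) / 2) = 0) :
    sin (N * θ) = 0 := by
  obtain _ | n := N
  · simp
  set v : ℕ → ℝ := fun j => cos (2 * π * j / (n + 1 : ℕ) + θ)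
  -- `F k` is the `k`-th derivative of `u ↦ (c - 2 * a * u) ^ (-3 / 2)`.
  set F : ℕ → ℝ → ℝ := fun k u =>
    (∏ i ∈ range k, (3 / 2 + i : ℝ)) * (2 * a) ^ k * (c - 2 * a * u) ^ (-(3 / 2 : ℝ) - k)
  set P := Lagrange.interpolate (Icc 1 (n + 1)) v (fun j => F 0 (v j))
  have hs : ∀ x ∈ Set.Iio (c / (2 * a)), 2 * a * x < c := fun x hx =>
    (lt_div_iff₀' (by positivity)).mp hx
  have hcoeff : 0 < P.coeff n :=
    coeff_interpolate_pos hinj (by simp) Set.ordConnected_Iio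
      (fun j hj => (lt_div_iff₀' (by positivity)).mpr (hlt j hj))
      (fun k x hx => hasDerivAt_prod_mul_sub_rpow _ _ _ k (hs x hx))
      (fun x hx => by have := sub_pos.mpr (hs x hx); positivity)
  have hP : P.natDegree < n + 1 :=
    Nat.lt_succ_of_le ((natDegree_interpolate_le hinj _).trans_eq (by simp))
  have hnode : ∀ j ∈ Icc 1 (n + 1), sin (2 * π * j / (n + 1 : ℕ) + θ) /
      (c - 2 * a * v j) ^ ((3 : ℝ) / 2) = sin (2 * π * j / (n + 1 : ℕ) + θ) * P.eval (v j) := by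
    intro j hj
    rw [Lagrange.eval_interpolate_at_node _ hinj hj]
    simp only [F, prod_range_zero, pow_zero, one_mul, CharP.cast_eq_zero, sub_zero,
      rpow_neg (sub_pos.mpr (hlt j hj) : 0 < c - 2 * a * v j).le, div_eq_mul_inv]
  rw [sum_congr rfl hnode, sum_sin_mul_eval_cos θ hP] at hsum
  simpa [hcoeff.ne', Nat.cast_add_one_ne_zero] using hsum

lemma exists_int_mul_pi_div_of_cos_eq_cos {N i j : ℕ} (hi : i ∈ Icc 1 N) (hj : j ∈ Icc 1 N)
    (hij : i ≠ j) {θ : ℝ} (h : cos (2 * π * i / N + θ) = cos (2 * π * j / N + θ)) :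
    ∃ k : ℤ, θ = k * π / N := by
  rw [mem_Icc] at hi hj
  have hN : (N : ℝ) ≠ 0 := by exact_mod_cast (show N ≠ 0 by omega)
  obtain ⟨k, hk | hk⟩ := cos_eq_cos_iff.mp h
  · have hk' : (j : ℝ) - i = k * N := by
      field_simp at hk
      nlinarith [pi_pos]
    have hkZ : (j : ℤ) - i = k * N := by exact_mod_cast hk'
    have hji : (j : ℤ) - i = 0 := Int.eq_zero_of_abs_lt_dvd ⟨k, by rw [hkZ, mul_comm]⟩
      (abs_lt.mpr ⟨by omega, by omega⟩)
    omega
  · refine ⟨k * N - i - j, ?_⟩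
    field_simp at hk ⊢
    push_cast
    linarith

lemma two_mul_mul_cos_lt {a h x : ℝ} (ha : 0 < a) (hcol : ¬(a = 1 ∧ h = 0 ∧ cos x = 1)) :
    2 * a * cos x < 1 + a ^ 2 + h ^ 2 := by
  have hcos := cos_le_one x
  by_contra! hle
  have h1 : a = 1 := by nlinarith [sq_nonneg (a - 1), sq_nonneg h]
  subst h1
  have h2 : h = 0 := by nlinarith [sq_nonneg h]
  exact hcol ⟨rfl, h2, by nlinarith [sq_nonneg h]⟩

lemma exists_nat_mul_pi_div_add_of_eq_int_mul_pi_div {N : ℕ} (hN : 1 ≤ N) {θ : ℝ} {k : ℤ}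
    (hk : θ = k * π / N) : ∃ j : ℕ, 1 ≤ j ∧ j ≤ 2 * N ∧ ∃ m : ℤ, θ = j * π / N + m * (2 * π) := by
  have h2N : (0 : ℤ) < 2 * N := by omega
  set r := (k - 1) % (2 * N)
  have hr : 0 ≤ r ∧ r < 2 * N := ⟨Int.emod_nonneg _ h2N.ne', Int.emod_lt_of_pos _ h2N⟩
  refine ⟨r.toNat + 1, by omega, by omega, (k - 1) / (2 * N), ?_⟩
  have hdiv : k = 2 * N * ((k - 1) / (2 * N)) + r + 1 := by
    have := Int.mul_ediv_add_emod (k - 1) (2 * N)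
    omega
  have hr' : ((r.toNat : ℕ) : ℝ) = r := by exact_mod_cast Int.toNat_of_nonneg hr.1
  have hN' : (N : ℝ) ≠ 0 := by positivity
  rw [hk, show (k : ℝ) = _ from congrArg (Int.cast (R := ℝ)) hdiv]
  push_cast [hr']
  field_simp
  ring

theorem stmt19_general (N : ℕ) (hN : 1 ≤ N) (a h θ : ℝ) (ha : 0 < a)
    (hsum : ∑ j ∈ Finset.Icc 1 N,
        Real.sin (2 * π * j / N + θ) /
          (1 + a ^ 2 - 2 * a * Real.cos (2 * π * j / N + θ) + h ^ 2) ^ ((3:ℝ)/2) = 0)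
    (hcol : ¬ (a = 1 ∧ h = 0 ∧ ∃ j ∈ Finset.Icc 1 N, Real.cos (2 * π * j / N + θ) = 1)) :
    ∃ j : ℕ, 1 ≤ j ∧ j ≤ 2 * N ∧ ∃ m : ℤ, θ = j * π / N + m * (2 * π) := by
  suffices ∃ k : ℤ, θ = k * π / N by
    obtain ⟨k, hk⟩ := this
    exact exists_nat_mul_pi_div_add_of_eq_int_mul_pi_div hN hk
  by_cases hinj : Set.InjOn (fun j : ℕ => cos (2 * π * j / N + θ)) (Icc 1 N)
  · have hlt : ∀ j ∈ Icc 1 N, 2 * a * cos (2 * π * j / N + θ) < 1 + a ^ 2 + h ^ 2 :=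
      fun j hj => two_mul_mul_cos_lt ha fun ⟨ha1, hh0, hcos⟩ => hcol ⟨ha1, hh0, j, hj, hcos⟩
    have hden : ∀ x : ℝ, 1 + a ^ 2 - 2 * a * x + h ^ 2 = 1 + a ^ 2 + h ^ 2 - 2 * a * x :=
      fun x => by ring
    simp only [hden] at hsum
    obtain ⟨k, hk⟩ := sin_eq_zero_iff.mp (sin_nat_mul_eq_zero_of_sum_eq_zero ha hinj hlt hsum)
    exact ⟨k, by field_simp; linarith⟩
  · simp only [Set.InjOn, not_forall] at hinj
    obtain ⟨i, hi, j, hj, hcos, hij⟩ := hinj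
    exact exists_int_mul_pi_div_of_cos_eq_cos hi hj hij hcos

theorem stmt19 (N : ℕ) (hN : 1 ≤ N) (a h θ : ℝ) (ha : 0 < a) (hh : 0 ≤ h)
    (hsum : ∑ j ∈ Finset.Icc 1 N,
        Real.sin (2 * π * j / N + θ) /
          (1 + a ^ 2 - 2 * a * Real.cos (2 * π * j / N + θ) + h ^ 2) ^ ((3:ℝ)/2) = 0)
    (hcol : ¬ (a = 1 ∧ h = 0 ∧ ∃ j ∈ Finset.Icc 1 N, Real.cos (2 * π * j / N + θ) = 1)) :
    ∃ j : ℕ, 1 ≤ j ∧ j ≤ 2 * N ∧ ∃ m : ℤ, θ = j * π / N + m * (2 * π) :=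
  stmt19_general N hN a h θ ha hsum hcol
end
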